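/- There exists a constant C > 0, independent of τ, of J_1, J_2, of a ∈ ℐ, and of η ∈ J̃_1 + J̃_2, such that for every ξ ∈ ℝ², ∑_{(μ,ν) ∈ k_0^{-1}({a})} χ_{E_a^η(μ,ν)}(ξ) ≤ C, where E_a^η(μ,ν) = {ξ ∈ ℝ² : (ξ, η) ∈ E_a(μ,ν)} is the horizontal slice of E_a(μ,ν) at height η. -/

import Mathlib

open Set Pointwise

noncomputable def GammaSet (τ μ : ℝ) : Set ℂ :=
  {ξ : ℂ | ξ ≠ 0 ∧ μ * (Real.sqrt τ)⁻¹ ≤ ξ.arg ∧ ξ.arg < (μ + 1) * (Real.sqrt τ)⁻¹}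

def calN (τ : ℝ) : Set ℤ :=
  {μ : ℤ | |(μ : ℝ)| ≤ Real.sqrt τ * (Real.pi / 8) - 1}

noncomputable def uSet (τ μ : ℝ) (J : Set ℝ) : Set (ℂ × ℝ) :=
  {p : ℂ × ℝ | |p.2 - ‖p.1‖| ≤ τ⁻¹ ∧ p.1 ∈ GammaSet τ μ ∧ ‖p.1‖ ∈ J}

noncomputable def calI (τ : ℝ) : Set ℝ :=
  {a : ℝ | ∃ μ ∈ calN τ, ∃ ν ∈ calN τ, a = ((μ : ℝ) + (ν : ℝ)) / 2}

/-!
Write a point of the slice as `ξ = z + w` with `z ∈ Γ_μ`, `w ∈ Γ_ν`. The law of cosines gives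
`|ξ|² = (|z| + |w|)² - 4 |z| |w| sin² x` with `x = (arg z - arg w) / 2`, and `η` fixes `|z| + |w|`
up to `O(τ⁻¹)`. Take two pairs `(μ, ν)`, `(μ', ν')` with `μ + ν = μ' + ν'` whose slices contain
`ξ`, with half-angles `x` and `y`. Then `x - y ≈ (μ - μ') τ^{-1/2}` and `x + y ≈ (μ' - ν) τ^{-1/2}`,
and comparing the two expressions for `|ξ|²` gives
`sin (x + y) sin (x - y) = sin² x - sin² y = O((1 + |μ - μ'| + |μ' - ν|) τ⁻¹)`.
By Jordan's inequality the left side is at least of order `|μ - μ'| |μ' - ν| τ⁻¹`, so `μ'` lies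
within a bounded distance of `μ` or of `ν`; and `μ'` determines `ν'`.
-/

open Real

theorem Complex.norm_add_sq_eq_sub_sin_sq (z w : ℂ) :
    ‖z + w‖ ^ 2 = (‖z‖ + ‖w‖) ^ 2 - 4 * ‖z‖ * ‖w‖ * Real.sin ((z.arg - w.arg) / 2) ^ 2 := by
  rcases eq_or_ne z 0 with rfl | hz
  · simp
  rcases eq_or_ne w 0 with rfl | hw
  · simp
  have hcos : 1 - 2 * Real.sin ((z.arg - w.arg) / 2) ^ 2 = Real.cos (z.arg - w.arg) := by
    conv_rhs => rw [← mul_div_cancel₀ (z.arg - w.arg) two_ne_zero, Real.cos_two_mul, Real.cos_sq']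
    ring
  calc ‖z + w‖ ^ 2 = ‖z‖ ^ 2 + ‖w‖ ^ 2 + 2 * ‖z‖ * ‖w‖ * Real.cos (z.arg - w.arg) := by
        rw [Real.cos_sub, Complex.cos_arg hz, Complex.cos_arg hw, Complex.sin_arg, Complex.sin_arg,
          Complex.sq_norm, Complex.sq_norm, Complex.sq_norm]
        field_simp
        simp only [Complex.normSq_apply, Complex.add_re, Complex.add_im]
        ring
    _ = _ := by rw [← hcos]; ring

theorem Real.sin_sq_sub_sin_sq (x y : ℝ) : sin x ^ 2 - sin y ^ 2 = sin (x + y) * sin (x - y) := by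
  rw [sin_add, sin_sub]
  linear_combination sin y ^ 2 * sin_sq_add_cos_sq x - sin x ^ 2 * sin_sq_add_cos_sq y

theorem Real.mul_abs_le_abs_sin_sq_sub_sin_sq {x y : ℝ} (hadd : |x + y| ≤ π / 2)
    (hsub : |x - y| ≤ π / 2) :
    (2 / π) ^ 2 * (|x + y| * |x - y|) ≤ |sin x ^ 2 - sin y ^ 2| := by
  rw [sin_sq_sub_sin_sq, abs_mul, sq, mul_mul_mul_comm]
  exact mul_le_mul (mul_abs_le_abs_sin hadd) (mul_abs_le_abs_sin hsub) (by positivity)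
    (abs_nonneg _)

theorem abs_sin_sq_sub_sin_sq_le {δ r₁ r₂ s₁ s₂ x y : ℝ}
    (hr₁ : r₁ ∈ Icc 1 2) (hr₂ : r₂ ∈ Icc 1 2) (hs₁ : s₁ ∈ Icc 1 2) (hs₂ : s₂ ∈ Icc 1 2)
    (h₁ : |r₁ - s₁| ≤ δ) (h₂ : |r₂ - s₂| ≤ δ) (hsum : |(r₁ + r₂) - (s₁ + s₂)| ≤ 4 * δ ^ 2)
    (heq : (r₁ + r₂) ^ 2 - 4 * r₁ * r₂ * sin x ^ 2 = (s₁ + s₂) ^ 2 - 4 * s₁ * s₂ * sin y ^ 2) :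
    |sin x ^ 2 - sin y ^ 2| ≤ 8 * δ ^ 2 + 4 * δ * y ^ 2 := by
  obtain ⟨hr₁l, hr₁u⟩ := hr₁
  obtain ⟨hr₂l, hr₂u⟩ := hr₂
  obtain ⟨hs₁l, hs₁u⟩ := hs₁
  obtain ⟨hs₂l, hs₂u⟩ := hs₂
  have hδ : 0 ≤ δ := (abs_nonneg _).trans h₁
  have hprod : |r₁ * r₂ - s₁ * s₂| ≤ 4 * δ :=
    calc |r₁ * r₂ - s₁ * s₂| = |(r₁ - s₁) * r₂ + s₁ * (r₂ - s₂)| := by ring_nf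
      _ ≤ |r₁ - s₁| * r₂ + s₁ * |r₂ - s₂| := by
        grw [abs_add_le, abs_mul, abs_mul, abs_of_pos (by linarith : 0 < r₂),
          abs_of_pos (by linarith : 0 < s₁)]
      _ ≤ δ * 2 + 2 * δ := by gcongr
      _ = 4 * δ := by ring
  have hsq : |(r₁ + r₂) ^ 2 - (s₁ + s₂) ^ 2| ≤ 32 * δ ^ 2 :=
    calc |(r₁ + r₂) ^ 2 - (s₁ + s₂) ^ 2| = (r₁ + r₂ + (s₁ + s₂)) * |r₁ + r₂ - (s₁ + s₂)| := by
          rw [sq_sub_sq, abs_mul, abs_of_pos (by linarith)]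
      _ ≤ 8 * (4 * δ ^ 2) := by gcongr; linarith
      _ = 32 * δ ^ 2 := by ring
  have hid : 4 * (r₁ * r₂) * (sin x ^ 2 - sin y ^ 2) =
      ((r₁ + r₂) ^ 2 - (s₁ + s₂) ^ 2) - 4 * (r₁ * r₂ - s₁ * s₂) * sin y ^ 2 := by
    linear_combination -heq
  have hrr : 1 ≤ r₁ * r₂ := one_le_mul_of_one_le_of_one_le hr₁l hr₂l
  calc |sin x ^ 2 - sin y ^ 2| ≤ (r₁ * r₂) * |sin x ^ 2 - sin y ^ 2| :=
        le_mul_of_one_le_left (abs_nonneg _) hrr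
    _ = (|(r₁ + r₂) ^ 2 - (s₁ + s₂) ^ 2 - 4 * (r₁ * r₂ - s₁ * s₂) * sin y ^ 2|) / 4 := by
        rw [← hid, abs_mul, abs_of_pos (by positivity : (0 : ℝ) < 4 * (r₁ * r₂))]; ring
    _ ≤ (32 * δ ^ 2 + 4 * (4 * δ) * y ^ 2) / 4 := by
        gcongr
        grw [abs_sub, abs_mul, abs_mul, abs_of_nonneg (sq_nonneg (sin y)), hsq, hprod,
          sin_sq_le_sq]
        norm_num
    _ = 8 * δ ^ 2 + 4 * δ * y ^ 2 := by ring

theorem abs_le_or_abs_le_of_abs_sin_sq_sub_sin_sq_le {δ m n x y : ℝ} (hδ : 0 < δ)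
    (hx : |x| ≤ π / 8) (hy : |y| ≤ π / 8)
    (hsub : |x - y - m * δ| ≤ δ) (hadd : |x + y - n * δ| ≤ δ)
    (hsin : |sin x ^ 2 - sin y ^ 2| ≤ 8 * δ ^ 2 + 4 * δ * y ^ 2) :
    |m| ≤ 20 ∨ |n| ≤ 20 := by
  by_contra! hmn
  obtain ⟨hm, hn⟩ := hmn
  have hπ : π < 3.15 := pi_lt_d2
  have hsub_ge : (|m| - 1) * δ ≤ |x - y| := by
    have := abs_sub (x - y) (x - y - m * δ)
    rw [sub_sub_cancel, abs_mul, abs_of_pos hδ] at this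
    linarith
  have hadd_ge : (|n| - 1) * δ ≤ |x + y| := by
    have := abs_sub (x + y) (x + y - n * δ)
    rw [sub_sub_cancel, abs_mul, abs_of_pos hδ] at this
    linarith
  have hy_le : |y| ≤ ((|m| + |n|) / 2 + 1) * δ := by
    have h2y : |2 * y| ≤ δ + δ + (|n| + |m|) * δ := by
      rw [show 2 * y = (x + y - n * δ) - (x - y - m * δ) + (n - m) * δ by ring]
      grw [abs_add_le, abs_sub, abs_mul, abs_of_pos hδ, hadd, hsub, abs_sub n m]
    rw [abs_mul, abs_two] at h2y
    linarith
  have hjordan : (2 / π) ^ 2 * (|x + y| * |x - y|) ≤ |sin x ^ 2 - sin y ^ 2| := by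
    apply mul_abs_le_abs_sin_sq_sub_sin_sq
    · linarith [abs_add_le x y, pi_pos]
    · linarith [abs_sub x y, pi_pos]
  have hπ_inv : 1 / 3 ≤ (2 / π) ^ 2 := by
    rw [div_pow, le_div_iff₀ (by positivity)]
    nlinarith [pi_pos]
  have hy_sq : 4 * δ * y ^ 2 ≤ (|m| + |n| + 2) * δ ^ 2 :=
    calc 4 * δ * y ^ 2 = 4 * δ * (|y| * |y|) := by rw [← sq, sq_abs]
      _ ≤ 4 * δ * (1 / 2 * (((|m| + |n|) / 2 + 1) * δ)) := by
          refine mul_le_mul_of_nonneg_left ?_ (by positivity)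
          exact mul_le_mul (hy.trans (by linarith : π / 8 ≤ 1 / 2)) hy_le (abs_nonneg _)
            (by norm_num)
      _ = (|m| + |n| + 2) * δ ^ 2 := by ring
  have hbound : (|m| - 1) * (|n| - 1) / 3 ≤ |m| + |n| + 10 := by
    refine le_of_mul_le_mul_right ?_ (pow_pos hδ 2)
    calc (|m| - 1) * (|n| - 1) / 3 * δ ^ 2 = 1 / 3 * (((|n| - 1) * δ) * ((|m| - 1) * δ)) := by
          ring
      _ ≤ (2 / π) ^ 2 * (|x + y| * |x - y|) := by
          refine mul_le_mul hπ_inv (mul_le_mul hadd_ge hsub_ge ?_ (abs_nonneg _)) ?_ (by positivity)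
          · exact mul_nonneg (by linarith) hδ.le
          · exact mul_nonneg (mul_nonneg (by linarith) hδ.le) (mul_nonneg (by linarith) hδ.le)
      _ ≤ 8 * δ ^ 2 + 4 * δ * y ^ 2 := hjordan.trans hsin
      _ ≤ (|m| + |n| + 10) * δ ^ 2 := by linarith
  nlinarith [mul_pos (sub_pos.2 hm) (sub_pos.2 hn)]

theorem abs_arg_le_of_mem_GammaSet {τ : ℝ} {μ : ℤ} {z : ℂ} (hτ : 0 < τ) (hμ : μ ∈ calN τ)
    (hz : z ∈ GammaSet τ μ) : |z.arg| ≤ π / 8 := by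
  obtain ⟨-, hlow, hup⟩ := hz
  have hs : 0 < √τ := sqrt_pos.2 hτ
  have hμδ : |(μ : ℝ)| * (√τ)⁻¹ ≤ π / 8 - (√τ)⁻¹ :=
    calc |(μ : ℝ)| * (√τ)⁻¹ ≤ (√τ * (π / 8) - 1) * (√τ)⁻¹ := by gcongr; exact hμ
      _ = π / 8 - (√τ)⁻¹ := by field_simp
  have h₁ := mul_le_mul_of_nonneg_right (neg_abs_le (μ : ℝ)) (inv_pos.2 hs).le
  have h₂ := mul_le_mul_of_nonneg_right (le_abs_self (μ : ℝ)) (inv_pos.2 hs).le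
  rw [abs_le]
  constructor <;> linarith

theorem exists_of_mem_uSet_add_uSet {τ μ ν η : ℝ} {J₁ J₂ : Set ℝ} {ξ : ℂ}
    (h : (ξ, η) ∈ uSet τ μ J₁ + uSet τ ν J₂) :
    ∃ z w : ℂ, z + w = ξ ∧ z ∈ GammaSet τ μ ∧ w ∈ GammaSet τ ν ∧ ‖z‖ ∈ J₁ ∧ ‖w‖ ∈ J₂ ∧
      |η - (‖z‖ + ‖w‖)| ≤ 2 * τ⁻¹ := by
  obtain ⟨⟨z, s⟩, ⟨hs, hz, hzJ⟩, ⟨w, t⟩, ⟨ht, hw, hwJ⟩, hsum⟩ := h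
  simp only [Prod.mk_add_mk, Prod.mk.injEq] at hsum hs ht
  obtain ⟨rfl, rfl⟩ := hsum
  refine ⟨z, w, rfl, hz, hw, hzJ, hwJ, ?_⟩
  rw [abs_le] at hs ht ⊢
  constructor <;> linarith

theorem abs_sub_le_or_abs_sub_le_of_mem_uSet_add_uSet {τ α₁ β₁ α₂ β₂ η : ℝ} {ξ : ℂ}
    {μ ν μ' ν' : ℤ} (hτ : 0 < τ)
    (hα₁ : 1 ≤ α₁) (hβ₁ : β₁ ≤ 2) (hJ₁ : β₁ - α₁ ≤ (√τ)⁻¹)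
    (hα₂ : 1 ≤ α₂) (hβ₂ : β₂ ≤ 2) (hJ₂ : β₂ - α₂ ≤ (√τ)⁻¹)
    (hμ : μ ∈ calN τ) (hν : ν ∈ calN τ) (hμ' : μ' ∈ calN τ) (hν' : ν' ∈ calN τ)
    (hsum : μ + ν = μ' + ν')
    (h : (ξ, η) ∈ uSet τ μ (Icc α₁ β₁) + uSet τ ν (Icc α₂ β₂))
    (h' : (ξ, η) ∈ uSet τ μ' (Icc α₁ β₁) + uSet τ ν' (Icc α₂ β₂)) :
    |μ' - μ| ≤ 20 ∨ |μ' - ν| ≤ 20 := by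
  obtain ⟨z, w, rfl, hz, hw, hz₁, hw₂, hη⟩ := exists_of_mem_uSet_add_uSet h
  obtain ⟨z', w', hzw', hz', hw', hz₁', hw₂', hη'⟩ := exists_of_mem_uSet_add_uSet h'
  set δ := (√τ)⁻¹ with hδ_def
  have hδ : 0 < δ := inv_pos.2 (sqrt_pos.2 hτ)
  have hτδ : τ⁻¹ = δ ^ 2 := by rw [hδ_def, inv_pow, sq_sqrt hτ.le]
  have hsin := abs_sin_sq_sub_sin_sq_le
    (Icc_subset_Icc hα₁ hβ₁ hz₁) (Icc_subset_Icc hα₂ hβ₂ hw₂)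
    (Icc_subset_Icc hα₁ hβ₁ hz₁') (Icc_subset_Icc hα₂ hβ₂ hw₂')
    ((dist_le_of_mem_Icc hz₁ hz₁').trans hJ₁) ((dist_le_of_mem_Icc hw₂ hw₂').trans hJ₂)
    (by rw [abs_le] at hη hη' ⊢; constructor <;> linarith)
    (by rw [← Complex.norm_add_sq_eq_sub_sin_sq, ← Complex.norm_add_sq_eq_sub_sin_sq, hzw'])
  have hx : |(z.arg - w.arg) / 2| ≤ π / 8 := by
    have := abs_arg_le_of_mem_GammaSet hτ hμ hz
    have := abs_arg_le_of_mem_GammaSet hτ hν hw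
    rw [abs_le] at *; constructor <;> linarith
  have hy : |(z'.arg - w'.arg) / 2| ≤ π / 8 := by
    have := abs_arg_le_of_mem_GammaSet hτ hμ' hz'
    have := abs_arg_le_of_mem_GammaSet hτ hν' hw'
    rw [abs_le] at *; constructor <;> linarith
  have hν'δ : (ν' : ℝ) * δ = (μ + ν - μ') * δ := by
    rw [show (ν' : ℝ) = μ + ν - μ' by rw [eq_sub_iff_add_eq']; exact_mod_cast hsum.symm]
  obtain ⟨-, hz_lo, hz_hi⟩ := hz
  obtain ⟨-, hw_lo, hw_hi⟩ := hw
  obtain ⟨-, hz'_lo, hz'_hi⟩ := hz'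
  obtain ⟨-, hw'_lo, hw'_hi⟩ := hw'
  have hsub : |(z.arg - w.arg) / 2 - (z'.arg - w'.arg) / 2 - (μ - μ') * δ| ≤ δ := by
    rw [abs_le]; constructor <;> linarith
  have hadd : |(z.arg - w.arg) / 2 + (z'.arg - w'.arg) / 2 - (μ' - ν) * δ| ≤ δ := by
    rw [abs_le]; constructor <;> linarith
  rcases abs_le_or_abs_le_of_abs_sin_sq_sub_sin_sq_le hδ hx hy hsub hadd hsin with h | h
  · left; rw [abs_sub_comm]; exact_mod_cast h
  · right; exact_mod_cast h

theorem finite_and_ncard_le_of_pairwise_close {S : Set (ℤ × ℤ)} {K : ℕ}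
    (hS : ∀ p ∈ S, ∀ q ∈ S, q.1 + q.2 = p.1 + p.2 ∧ (|q.1 - p.1| ≤ K ∨ |q.1 - p.2| ≤ K)) :
    S.Finite ∧ S.ncard ≤ 2 * (2 * K + 1) := by
  rcases S.eq_empty_or_nonempty with rfl | ⟨p, hp⟩
  · simp
  set F : Finset ℤ := Finset.Icc (p.1 - K) (p.1 + K) ∪ Finset.Icc (p.2 - K) (p.2 + K)
  have hsub : S ⊆ F.image fun k => (k, p.1 + p.2 - k) := by
    intro q hq
    obtain ⟨hsum, hclose⟩ := hS p hp q hq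
    rw [Finset.coe_image]
    refine ⟨q.1, ?_, by ext <;> simp only; omega⟩
    simp only [F, Finset.coe_union, Finset.coe_Icc, mem_union, mem_Icc]
    rcases hclose with h | h <;> rw [abs_le] at h <;> omega
  refine ⟨(Finset.finite_toSet _).subset hsub, ?_⟩
  calc S.ncard ≤ (F.image fun k => (k, p.1 + p.2 - k)).card :=
        (ncard_le_ncard hsub (Finset.finite_toSet _)).trans_eq (ncard_coe_finset _)
    _ ≤ F.card := Finset.card_image_le
    _ ≤ 2 * (2 * K + 1) := by
        refine (Finset.card_union_le _ _).trans ?_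
        simp only [Int.card_Icc]
        omega

theorem statement3 :
    ∃ C : ℕ, 0 < C ∧
      ∀ τ : ℝ, (10 : ℝ) ^ 6 < τ →
      ∀ α₁ β₁ α₂ β₂ : ℝ,
        1 ≤ α₁ → α₁ ≤ β₁ → β₁ ≤ 2 → β₁ - α₁ ≤ (Real.sqrt τ)⁻¹ →
        1 ≤ α₂ → α₂ ≤ β₂ → β₂ ≤ 2 → β₂ - α₂ ≤ (Real.sqrt τ)⁻¹ →
        ∀ a ∈ calI τ,
        ∀ η ∈ Icc (α₁ + α₂ - 2 * τ⁻¹) (β₁ + β₂ + 2 * τ⁻¹),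
        ∀ ξ : ℂ,
          {p : ℤ × ℤ | p.1 ∈ calN τ ∧ p.2 ∈ calN τ ∧
              ((p.1 : ℝ) + (p.2 : ℝ)) / 2 = a ∧
              (ξ, η) ∈ uSet τ (p.1 : ℝ) (Icc α₁ β₁) + uSet τ (p.2 : ℝ) (Icc α₂ β₂)}.Finite ∧
          {p : ℤ × ℤ | p.1 ∈ calN τ ∧ p.2 ∈ calN τ ∧
              ((p.1 : ℝ) + (p.2 : ℝ)) / 2 = a ∧
              (ξ, η) ∈ uSet τ (p.1 : ℝ) (Icc α₁ β₁) + uSet τ (p.2 : ℝ) (Icc α₂ β₂)}.ncard ≤ C := by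
  refine ⟨2 * (2 * 20 + 1), by norm_num,
    fun τ hτ α₁ β₁ α₂ β₂ hα₁ _ hβ₁ hJ₁ hα₂ _ hβ₂ hJ₂ a _ η _ ξ =>
      finite_and_ncard_le_of_pairwise_close ?_⟩
  rintro ⟨μ, ν⟩ ⟨hμ, hν, ha, hp⟩ ⟨μ', ν'⟩ ⟨hμ', hν', ha', hq⟩
  have hsum : μ + ν = μ' + ν' := by exact_mod_cast (by linarith : (μ + ν : ℝ) = μ' + ν')
  exact ⟨hsum.symm, abs_sub_le_or_abs_sub_le_of_mem_uSet_add_uSet (by linarith)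
    hα₁ hβ₁ hJ₁ hα₂ hβ₂ hJ₂ hμ hν hμ' hν' hsum hp hq⟩
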